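/- Let X = Y ∪ Z be a union of subspaces of a topological space W, where Y is star-Scheepers in W and Z is σ-starcompact (a countable union of starcompact subspaces). Then X is star-Scheepers in W. In particular, if a space X is a union of a star-Scheepers subspace and a σ-starcompact subspace, then X is star-Scheepers. -/

import Mathlib

open Set

/-- The dominating number 𝔡: least cardinality of a dominating family in ℕ^ℕ. -/
noncomputable def dominatingNumber : Cardinal :=
  sInf { c | ∃ D : Set (ℕ → ℕ),
    (∀ g : ℕ → ℕ, ∃ f ∈ D, ∀ᶠ n in Filter.atTop, g n ≤ f n) ∧ c = Cardinal.mk D }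

/-- `U` is an open cover of the space `X`. -/
def IsOpenCover {X : Type*} [TopologicalSpace X] (U : Set (Set X)) : Prop :=
  (∀ u ∈ U, IsOpen u) ∧ ⋃₀ U = Set.univ

/-- The star of a set `A` with respect to a family `U`. -/
def starOf {X : Type*} (A : Set X) (U : Set (Set X)) : Set X :=
  ⋃₀ {B | B ∈ U ∧ (A ∩ B).Nonempty}

/-- The star-Scheepers property (ω-cover form). -/
def StarScheepers (X : Type*) [TopologicalSpace X] : Prop :=
  ∀ U : ℕ → Set (Set X), (∀ n, IsOpenCover (U n)) →
    ∃ V : ℕ → Set (Set X), (∀ n, V n ⊆ U n ∧ (V n).Finite) ∧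
      ∀ F : Set X, F.Finite → ∃ n, F ⊆ starOf (⋃₀ V n) (U n)

/-- The strongly star-Scheepers property. -/
def StronglyStarScheepers (X : Type*) [TopologicalSpace X] : Prop :=
  ∀ U : ℕ → Set (Set X), (∀ n, IsOpenCover (U n)) →
    ∃ F : ℕ → Set X, (∀ n, (F n).Finite) ∧
      ∀ G : Set X, G.Finite → ∃ n, G ⊆ starOf (F n) (U n)

/-- `Y` is star-Scheepers in `W`. -/
def StarScheepersIn {W : Type*} [TopologicalSpace W] (Y : Set W) : Prop :=
  ∀ U : ℕ → Set (Set W), (∀ n, IsOpenCover (U n)) →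
    ∃ V : ℕ → Set (Set W), (∀ n, V n ⊆ U n ∧ (V n).Finite) ∧
      ∀ F : Set W, F ⊆ Y → F.Finite → ∃ n, F ⊆ starOf (⋃₀ V n) (U n)

/-- `C` is starcompact in `W` (via covers of `W`). -/
def StarcompactIn {W : Type*} [TopologicalSpace W] (C : Set W) : Prop :=
  ∀ U : Set (Set W), IsOpenCover U →
    ∃ V ⊆ U, V.Finite ∧ C ⊆ starOf (⋃₀ V) U

lemma starOf_mono {X : Type*} {A A' : Set X} (h : A ⊆ A') (U : Set (Set X)) :
    starOf A U ⊆ starOf A' U := by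
  apply sUnion_subset_sUnion
  rintro B ⟨hBU, x, hxA, hxB⟩
  exact ⟨hBU, x, h hxA, hxB⟩

lemma finite_subset_mono_iUnion {X : Type*} {D : ℕ → Set X} {s : Set X} (hs : s.Finite)
    (hsub : s ⊆ ⋃ k, D k) : ∃ K, s ⊆ ⋃ j ∈ Finset.range (K + 1), D j := by
  classical
  refine Set.Finite.induction_on
    (motive := fun s _ => s ⊆ (⋃ k, D k) → ∃ K, s ⊆ ⋃ j ∈ Finset.range (K + 1), D j)
    s hs (fun _ => ⟨0, by simp⟩) (fun {a t} hat htfin ih hsub => ?_) hsub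
  obtain ⟨K, hK⟩ := ih ((subset_insert a t).trans hsub)
  obtain ⟨k, hk⟩ := mem_iUnion.1 (hsub (mem_insert a t))
  refine ⟨max K k, insert_subset ?_ (hK.trans ?_)⟩
  · exact mem_biUnion (Finset.mem_range.2 (Nat.lt_succ_of_le (le_max_right K k))) hk
  · intro x hx
    simp only [mem_iUnion, Finset.mem_range] at hx ⊢
    obtain ⟨j, hj, hxj⟩ := hx
    exact ⟨j, lt_of_lt_of_le hj (by omega), hxj⟩

theorem stmt_9 {W : Type*} [TopologicalSpace W] (Y Z X : Set W)
    (hX : X = Y ∪ Z) (hY : StarScheepersIn Y)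
    (hZ : ∃ C : ℕ → Set W, (∀ k, StarcompactIn (C k)) ∧ Z = ⋃ k, C k) :
    StarScheepersIn X := by
  classical
  obtain ⟨C, hC, rfl⟩ := hZ
  subst hX
  intro U hU
  have hT : ∀ j n, ∃ T ⊆ U n, T.Finite ∧ C j ⊆ starOf (⋃₀ T) (U n) := fun j n =>
    hC j (U n) (hU n)
  choose T hTsub hTfin hTstar using hT
  have hVk : ∀ k : ℕ, ∃ V : ℕ → Set (Set W),
      (∀ i, V i ⊆ U (Nat.pair k i) ∧ (V i).Finite) ∧
      ∀ F : Set W, F ⊆ Y → F.Finite →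
        ∃ i, F ⊆ starOf (⋃₀ V i) (U (Nat.pair k i)) :=
    fun k => hY (fun i => U (Nat.pair k i)) (fun i => hU (Nat.pair k i))
  choose Vk hVksub hVkstar using hVk
  refine ⟨fun n => Vk n.unpair.1 n.unpair.2 ∪
      ⋃ j ∈ Finset.range (n.unpair.1 + 1), T j n, fun n => ⟨?_, ?_⟩, ?_⟩
  · apply union_subset
    · have := (hVksub n.unpair.1 n.unpair.2).1
      rwa [Nat.pair_unpair] at this
    · exact iUnion₂_subset fun j _ => hTsub j n
  · exact ((hVksub n.unpair.1 n.unpair.2).2).union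
      (Set.Finite.biUnion (Finset.range (n.unpair.1 + 1)).finite_toSet
        fun j _ => hTfin j n)
  · intro F hFX hFfin
    have hFZ : F \ Y ⊆ ⋃ k, C k := fun x hx => by
      rcases hFX hx.1 with h | h
      · exact absurd h hx.2
      · exact h
    obtain ⟨K, hK⟩ := finite_subset_mono_iUnion (hFfin.diff : (F \ Y).Finite) hFZ
    obtain ⟨i, hi⟩ := hVkstar K (F ∩ Y) inter_subset_right (hFfin.inter_of_left Y)
    refine ⟨Nat.pair K i, ?_⟩
    simp only [Nat.unpair_pair]
    intro x hx
    set n := Nat.pair K i with hn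
    by_cases hxY : x ∈ Y
    · exact starOf_mono (sUnion_subset_sUnion subset_union_left) (U n) (hi ⟨hx, hxY⟩)
    · have hxC : x ∈ ⋃ j ∈ Finset.range (K + 1), C j := hK ⟨hx, hxY⟩
      simp only [mem_iUnion, Finset.mem_range] at hxC
      obtain ⟨j, hjK, hxj⟩ := hxC
      refine starOf_mono ?_ (U n) (hTstar j n hxj)
      apply sUnion_subset_sUnion
      exact (subset_iUnion₂ (s := fun j _ => T j n) j (Finset.mem_range.2 hjK)).trans
        subset_union_right
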